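/- arXiv:2404.03633 — 6 statements merged into one kernel-verified Lean document; each statement's English description precedes it below -/
import Mathlib

section
/- Let x₀ ∈ ℝ and let f : [x₀, ∞) → ℝ be a nonnegative, nonincreasing function. Assume there are constants C > 0, α > 0 and β > 1 such that f(y) ≤ C·(y − x)^{−α}·f(x)^β for all y > x ≥ x₀. Then f(y) = 0 for every y ≥ x₀ + d, where d = (C · f(x₀)^{β−1} · 2^{αβ/(β−1)})^{1/α}. -/
lemma stampacchia_aux (C α β A d : ℝ) (hC : 0 < C) (hα : 0 < α) (hβ : 1 < β)
    (hA : 0 < A) (hdpos : 0 < d)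
    (hd : d ^ α = C * A ^ (β - 1) * 2 ^ (α * β / (β - 1))) (n : ℕ) :
    C * (d * (1/2 : ℝ) ^ (n + 1)) ^ (-α) * (A * ((2:ℝ) ^ (-(α/(β-1)))) ^ n) ^ β
      = A * ((2:ℝ) ^ (-(α/(β-1)))) ^ (n + 1) := by
  have hβ' : β - 1 ≠ 0 := by nlinarith
  have hr : (0:ℝ) < (2:ℝ) ^ (-(α/(β-1))) := Real.rpow_pos_of_pos (by norm_num) _
  have hhalf : (0:ℝ) < (1/2 : ℝ) ^ (n + 1) := by positivity
  have hL : 0 < C * (d * (1/2 : ℝ) ^ (n + 1)) ^ (-α) * (A * ((2:ℝ) ^ (-(α/(β-1)))) ^ n) ^ β := by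
    positivity
  have hR : 0 < A * ((2:ℝ) ^ (-(α/(β-1)))) ^ (n + 1) := by positivity
  apply Real.log_injOn_pos (Set.mem_Ioi.2 hL) (Set.mem_Ioi.2 hR)
  have hld : α * Real.log d = Real.log C + (β - 1) * Real.log A + (α * β / (β - 1)) * Real.log 2 := by
    have := congrArg Real.log hd
    rw [Real.log_rpow hdpos, Real.log_mul (by positivity) (by positivity),
      Real.log_mul hC.ne' (by positivity), Real.log_rpow hA, Real.log_rpow (by norm_num)] at this
    linarith
  rw [Real.log_mul (by positivity) (by positivity), Real.log_mul hC.ne' (by positivity),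
    Real.log_mul hA.ne' (by positivity),
    Real.log_rpow (by positivity), Real.log_rpow (by positivity),
    Real.log_mul hdpos.ne' hhalf.ne', Real.log_mul hA.ne' (by positivity),
    Real.log_pow, Real.log_pow, Real.log_pow,
    Real.log_rpow (by norm_num : (0:ℝ) < 2)]
  have h12 : Real.log (1/2 : ℝ) = -Real.log 2 := by
    rw [one_div, Real.log_inv]
  rw [h12]
  have hLd : Real.log d = (Real.log C + (β - 1) * Real.log A + (α * β / (β - 1)) * Real.log 2) / α := by
    field_simp at hld ⊢; linarith
  rw [hLd]
  field_simp
  push_cast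
  ring


/-- Classical Stampacchia iteration lemma, case β > 1. -/
theorem stampacchia_beta_gt_one
    (x₀ C α β : ℝ) (f : ℝ → ℝ)
    (hC : 0 < C) (hα : 0 < α) (hβ : 1 < β)
    (hnonneg : ∀ x, x₀ ≤ x → 0 ≤ f x)
    (hmono : ∀ x y, x₀ ≤ x → x ≤ y → f y ≤ f x)
    (hiter : ∀ x y, x₀ ≤ x → x < y → f y ≤ C * (y - x) ^ (-α) * f x ^ β) :
    ∀ y, x₀ + (C * f x₀ ^ (β - 1) * 2 ^ (α * β / (β - 1))) ^ (1 / α) ≤ y →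
      f y = 0 := by
  intro y hy
  set A := f x₀ with hAdef
  have hA0 : 0 ≤ A := hnonneg x₀ le_rfl
  rcases eq_or_lt_of_le hA0 with hA | hA
  · -- f x₀ = 0
    have hx₀y : x₀ ≤ y := by
      have : (0:ℝ) ≤ (C * A ^ (β - 1) * 2 ^ (α * β / (β - 1))) ^ (1 / α) := by positivity
      linarith
    have h1 := hmono x₀ y le_rfl hx₀y
    have h2 := hnonneg y hx₀y
    linarith
  · -- f x₀ > 0
    set d := (C * A ^ (β - 1) * 2 ^ (α * β / (β - 1))) ^ (1 / α) with hddef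
    have hK : 0 < C * A ^ (β - 1) * 2 ^ (α * β / (β - 1)) := by positivity
    have hdpos : 0 < d := Real.rpow_pos_of_pos hK _
    have hdα : d ^ α = C * A ^ (β - 1) * 2 ^ (α * β / (β - 1)) := by
      rw [hddef, ← Real.rpow_mul hK.le, one_div, inv_mul_cancel₀ hα.ne', Real.rpow_one]
    set r := (2:ℝ) ^ (-(α/(β-1))) with hrdef
    have hr0 : 0 < r := Real.rpow_pos_of_pos (by norm_num) _
    have hr1 : r < 1 := by
      apply Real.rpow_lt_one_of_one_lt_of_neg (by norm_num)
      have : 0 < β - 1 := by linarith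
      have : 0 < α / (β - 1) := by positivity
      linarith
    have hxle : ∀ n : ℕ, x₀ ≤ x₀ + d * (1 - (1/2:ℝ) ^ n) := by
      intro n
      have h1 : (1/2:ℝ) ^ n ≤ 1 := pow_le_one₀ (by norm_num) (by norm_num)
      nlinarith
    have key : ∀ n : ℕ, f (x₀ + d * (1 - (1/2:ℝ) ^ n)) ≤ A * r ^ n := by
      intro n
      induction n with
      | zero => simp [hAdef]
      | succ n ih =>
        have hlt : x₀ + d * (1 - (1/2:ℝ) ^ n) < x₀ + d * (1 - (1/2:ℝ) ^ (n+1)) := by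
          have : (1/2:ℝ) ^ (n+1) < (1/2:ℝ) ^ n := by
            apply pow_lt_pow_right_of_lt_one₀ (by norm_num) (by norm_num) (by omega)
          nlinarith
        have hdiff : (x₀ + d * (1 - (1/2:ℝ) ^ (n+1))) - (x₀ + d * (1 - (1/2:ℝ) ^ n))
            = d * (1/2:ℝ) ^ (n+1) := by ring
        have h1 := hiter _ _ (hxle n) hlt
        rw [hdiff] at h1
        have hfn0 : 0 ≤ f (x₀ + d * (1 - (1/2:ℝ) ^ n)) := hnonneg _ (hxle n)
        have h2 : f (x₀ + d * (1 - (1/2:ℝ) ^ n)) ^ β ≤ (A * r ^ n) ^ β :=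
          Real.rpow_le_rpow hfn0 ih (by linarith)
        have h3 : C * (d * (1/2:ℝ) ^ (n+1)) ^ (-α) * f (x₀ + d * (1 - (1/2:ℝ) ^ n)) ^ β
            ≤ C * (d * (1/2:ℝ) ^ (n+1)) ^ (-α) * (A * r ^ n) ^ β := by
          apply mul_le_mul_of_nonneg_left h2
          positivity
        calc f (x₀ + d * (1 - (1/2:ℝ) ^ (n+1))) ≤ _ := h1
          _ ≤ C * (d * (1/2:ℝ) ^ (n+1)) ^ (-α) * (A * r ^ n) ^ β := h3
          _ = A * r ^ (n+1) := stampacchia_aux C α β A d hC hα hβ hA hdpos hdα n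
    have hfy : ∀ n : ℕ, f y ≤ A * r ^ n := by
      intro n
      refine le_trans (hmono _ y (hxle n) ?_) (key n)
      have h1 : (0:ℝ) ≤ (1/2:ℝ) ^ n := by positivity
      nlinarith
    have htend : Filter.Tendsto (fun n : ℕ => A * r ^ n) Filter.atTop (nhds 0) := by
      have := tendsto_pow_atTop_nhds_zero_of_lt_one hr0.le hr1
      simpa using this.const_mul A
    have hle0 : f y ≤ 0 := ge_of_tendsto' htend hfy
    have hge0 : 0 ≤ f y := hnonneg y (by
      have : (0:ℝ) < d := hdpos
      linarith)
    linarith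
end

section
/- Let x₀ ∈ ℝ and let f : [x₀, ∞) → ℝ be a nonnegative, nonincreasing function. Assume there are constants C > 0 and α > 0 such that f(y) ≤ C·(y − x)^{−α}·f(x) for all y > x ≥ x₀. Then f(y) ≤ e^{1 − ζ(y − x₀)} · f(x₀) for every y ≥ x₀, where ζ = (e·C)^{−1/α}. -/
/-!
Choose the step `h = (e C)^{1/α}`, for which `C h^{-α} = e⁻¹`: the decay inequality then says
that `f` loses a factor `e` on every step of length `h`, so `f (x₀ + n h) ≤ e^{-n} f (x₀)`.
A general `y` lies within one step beyond `x₀ + n h` with `n = ⌊(y - x₀) / h⌋`, and monotonicity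
costs at most one more factor `e`.
-/

open Real Set

lemma le_pow_mul_of_le_mul_add {f : ℝ → ℝ} {x₀ h c : ℝ} (hh : 0 ≤ h) (hc : 0 ≤ c)
    (hstep : ∀ x, x₀ ≤ x → f (x + h) ≤ c * f x) (n : ℕ) :
    f (x₀ + n * h) ≤ c ^ n * f x₀ := by
  induction n with
  | zero => simp
  | succ n ih =>
    calc f (x₀ + (n + 1 : ℕ) * h) = f (x₀ + n * h + h) := by push_cast; ring_nf
      _ ≤ c * f (x₀ + n * h) := hstep _ (le_add_of_nonneg_right (by positivity))
      _ ≤ c * (c ^ n * f x₀) := mul_le_mul_of_nonneg_left ih hc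
      _ = c ^ (n + 1) * f x₀ := by ring

lemma le_exp_one_sub_div_mul_of_le_exp_neg_one_mul_add {f : ℝ → ℝ} {x₀ h : ℝ} (hh : 0 < h)
    (hmono : AntitoneOn f (Ici x₀)) (hf₀ : 0 ≤ f x₀)
    (hstep : ∀ x, x₀ ≤ x → f (x + h) ≤ exp (-1) * f x) {y : ℝ} (hy : x₀ ≤ y) :
    f y ≤ exp (1 - (y - x₀) / h) * f x₀ := by
  set n := ⌊(y - x₀) / h⌋₊
  have hn_le : (n : ℝ) * h ≤ y - x₀ :=
    (le_div_iff₀ hh).mp (Nat.floor_le (div_nonneg (sub_nonneg.mpr hy) hh.le))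
  have hn_lt : (y - x₀) / h < n + 1 := Nat.lt_floor_add_one _
  have hexp : exp (-(n : ℝ)) ≤ exp (1 - (y - x₀) / h) := exp_le_exp.mpr (by linarith)
  calc f y ≤ f (x₀ + n * h) :=
        hmono (le_add_of_nonneg_right (by positivity : (0 : ℝ) ≤ n * h)) hy (by linarith)
    _ ≤ exp (-1) ^ n * f x₀ := le_pow_mul_of_le_mul_add hh.le (exp_pos _).le hstep n
    _ = exp (-(n : ℝ)) * f x₀ := by rw [← exp_nat_mul, mul_neg_one]
    _ ≤ exp (1 - (y - x₀) / h) * f x₀ := mul_le_mul_of_nonneg_right hexp hf₀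

lemma mul_exp_one_mul_rpow_one_div_rpow_neg {C α : ℝ} (hC : 0 < C) (hα : α ≠ 0) :
    C * ((exp 1 * C) ^ (1 / α)) ^ (-α) = exp (-1) := by
  rw [← rpow_mul (mul_pos (exp_pos 1) hC).le, one_div_mul_eq_div, neg_div, div_self hα,
    rpow_neg_one, mul_inv, exp_neg]
  field_simp

/-- Classical Stampacchia iteration lemma, case β = 1. -/
theorem stampacchia_beta_eq_one
    (x₀ C α : ℝ) (f : ℝ → ℝ)
    (hC : 0 < C) (hα : 0 < α)
    (hnonneg : ∀ x, x₀ ≤ x → 0 ≤ f x)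
    (hmono : ∀ x y, x₀ ≤ x → x ≤ y → f y ≤ f x)
    (hiter : ∀ x y, x₀ ≤ x → x < y → f y ≤ C * (y - x) ^ (-α) * f x) :
    ∀ y, x₀ ≤ y →
      f y ≤ Real.exp (1 - (Real.exp 1 * C) ^ (-(1 / α)) * (y - x₀)) * f x₀ := by
  intro y hy
  set h := (exp 1 * C) ^ (1 / α)
  have hh : 0 < h := by positivity
  have hstep : ∀ x, x₀ ≤ x → f (x + h) ≤ exp (-1) * f x := fun x hx => by
    have := hiter x (x + h) hx (by linarith)
    rwa [add_sub_cancel_left, mul_exp_one_mul_rpow_one_div_rpow_neg hC hα.ne'] at this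
  have hζ : (exp 1 * C) ^ (-(1 / α)) * (y - x₀) = (y - x₀) / h := by
    rw [rpow_neg (by positivity), inv_mul_eq_div]
  rw [hζ]
  exact le_exp_one_sub_div_mul_of_le_exp_neg_one_mul_add hh
    (fun a ha b _ hab => hmono a b ha hab) (hnonneg x₀ le_rfl) hstep hy
end

section
/- Let x₀ > 0 and let f : [x₀, ∞) → ℝ be a nonnegative, nonincreasing function. Assume there are constants C > 0, α > 0 and 0 < β < 1 such that f(y) ≤ C·(y − x)^{−α}·f(x)^β for all y > x ≥ x₀. Then, setting μ = α/(1 − β), one has f(y) ≤ 2^{μ/(1−β)} · ( C^{1/(1−β)} + (2x₀)^μ · f(x₀) ) · y^{−μ} for every y ≥ x₀. -/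
/-!
With μ = α/(1-β) one has α = μ(1-β), so a bound f(x) ≤ K x^(-μ) is carried by one step of the
iteration from x to 2x to the bound C 2^μ K^β (2x)^(-μ), which is again ≤ K (2x)^(-μ) as soon as
C 2^μ ≤ K^(1-β). The constant of the theorem is chosen so that this holds and so that, by
monotonicity, the bound already holds on [x₀, 2x₀]; doubling then covers [x₀, ∞).
-/

open Real

theorem forall_ge_of_doubling {P : ℝ → Prop} {a : ℝ} (ha : 0 < a)
    (hbase : ∀ x, a ≤ x → x ≤ 2 * a → P x) (hstep : ∀ x, a ≤ x → P x → P (2 * x)) :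
    ∀ x, a ≤ x → P x := by
  suffices h : ∀ n : ℕ, ∀ x, a ≤ x → x ≤ 2 ^ n * a → P x by
    intro x hx
    obtain ⟨n, hn⟩ := pow_unbounded_of_one_lt (x / a) one_lt_two
    exact h n x hx ((div_lt_iff₀ ha).1 hn).le
  intro n
  induction n with
  | zero => exact fun x hx hxa => hbase x hx (by linarith [pow_zero (2 : ℝ)])
  | succ n ih =>
    intro x hx hxn
    rcases le_or_gt x (2 * a) with hx2 | hx2
    · exact hbase x hx hx2
    · have hx2n : x / 2 ≤ 2 ^ n * a := by rw [pow_succ] at hxn; linarith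
      have hhalf := hstep (x / 2) (by linarith) (ih (x / 2) (by linarith) hx2n)
      rwa [mul_div_cancel₀ x two_ne_zero] at hhalf

theorem mul_rpow_neg_mul_rpow_le_two_mul_rpow_neg {C K μ β x u : ℝ} (hC : 0 ≤ C) (hK : 0 ≤ K)
    (hβ : 0 ≤ β) (hx : 0 < x) (hu₀ : 0 ≤ u) (hu : u ≤ K * x ^ (-μ)) (hCK : C * 2 ^ μ ≤ K ^ (1 - β)) :
    C * x ^ (-(μ * (1 - β))) * u ^ β ≤ K * (2 * x) ^ (-μ) := by
  calc C * x ^ (-(μ * (1 - β))) * u ^ β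
      ≤ C * x ^ (-(μ * (1 - β))) * (K * x ^ (-μ)) ^ β := by gcongr
    _ = C * 2 ^ μ * K ^ β * (2 * x) ^ (-μ) := by
      have hxx : x ^ (-(μ * (1 - β))) * x ^ (-μ * β) = x ^ (-μ) := by
        rw [← rpow_add hx]; ring_nf
      have h22 : (2 : ℝ) ^ μ * 2 ^ (-μ) = 1 := by rw [← rpow_add two_pos]; simp
      rw [mul_rpow hK (by positivity), ← rpow_mul hx.le, mul_rpow zero_le_two hx.le]
      linear_combination (C * K ^ β) * hxx - (C * K ^ β * x ^ (-μ)) * h22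
    _ ≤ K ^ (1 - β) * K ^ β * (2 * x) ^ (-μ) := by gcongr
    _ = K * (2 * x) ^ (-μ) := by rw [← rpow_add' hK (by norm_num), sub_add_cancel, rpow_one]

theorem mul_two_rpow_le_rpow {C D μ β : ℝ} (hC : 0 ≤ C) (hD : 0 ≤ D) (hβ : β < 1) :
    C * 2 ^ μ ≤ (2 ^ (μ / (1 - β)) * (C ^ (1 / (1 - β)) + D)) ^ (1 - β) := by
  have h1β : 0 < 1 - β := by linarith
  calc C * 2 ^ μ = (2 ^ (μ / (1 - β)) * C ^ (1 / (1 - β))) ^ (1 - β) := by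
        rw [mul_rpow (by positivity) (by positivity), ← rpow_mul zero_le_two, ← rpow_mul hC,
          div_mul_cancel₀ _ h1β.ne', one_div_mul_cancel h1β.ne', rpow_one, mul_comm]
    _ ≤ _ := by gcongr; linarith

theorem le_mul_rpow_neg_of_doubling_iter {f : ℝ → ℝ} {x₀ C K μ β : ℝ} (hx₀ : 0 < x₀)
    (hμ : 0 ≤ μ) (hβ : 0 ≤ β) (hC : 0 ≤ C) (hnonneg : ∀ x, x₀ ≤ x → 0 ≤ f x)
    (hle : ∀ x, x₀ ≤ x → f x ≤ f x₀)
    (hiter : ∀ x, x₀ ≤ x → f (2 * x) ≤ C * x ^ (-(μ * (1 - β))) * f x ^ β)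
    (hCK : C * 2 ^ μ ≤ K ^ (1 - β)) (hK : (2 * x₀) ^ μ * f x₀ ≤ K) :
    ∀ x, x₀ ≤ x → f x ≤ K * x ^ (-μ) := by
  have hK₀ : 0 ≤ K := le_trans (mul_nonneg (by positivity) (hnonneg x₀ le_rfl)) hK
  refine forall_ge_of_doubling hx₀ (fun x hx hx2 => ?_) fun x hx ih =>
    (hiter x hx).trans <|
      mul_rpow_neg_mul_rpow_le_two_mul_rpow_neg hC hK₀ hβ (by linarith) (hnonneg x hx) ih hCK
  calc f x ≤ f x₀ := hle x hx
    _ ≤ K * (2 * x₀) ^ (-μ) := by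
      rw [rpow_neg (by positivity), ← div_eq_mul_inv, le_div_iff₀ (by positivity), mul_comm]
      exact hK
    _ ≤ K * x ^ (-μ) :=
      mul_le_mul_of_nonneg_left (rpow_le_rpow_of_nonpos (by linarith) hx2 (by linarith)) hK₀

/-- Classical Stampacchia iteration lemma, case β < 1. -/
theorem stampacchia_beta_lt_one
    (x₀ C α β : ℝ) (f : ℝ → ℝ)
    (hx₀ : 0 < x₀) (hC : 0 < C) (hα : 0 < α) (hβ0 : 0 < β) (hβ1 : β < 1)
    (hnonneg : ∀ x, x₀ ≤ x → 0 ≤ f x)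
    (hmono : ∀ x y, x₀ ≤ x → x ≤ y → f y ≤ f x)
    (hiter : ∀ x y, x₀ ≤ x → x < y → f y ≤ C * (y - x) ^ (-α) * f x ^ β) :
    ∀ y, x₀ ≤ y →
      f y ≤ 2 ^ ((α / (1 - β)) / (1 - β)) *
        (C ^ (1 / (1 - β)) + (2 * x₀) ^ (α / (1 - β)) * f x₀) *
        y ^ (-(α / (1 - β))) := by
  have h1β : 0 < 1 - β := by linarith
  have hμ : 0 < α / (1 - β) := div_pos hα h1β
  have hf₀ : 0 ≤ (2 * x₀) ^ (α / (1 - β)) * f x₀ :=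
    mul_nonneg (by positivity) (hnonneg x₀ le_rfl)
  refine le_mul_rpow_neg_of_doubling_iter hx₀ hμ.le hβ0.le hC.le hnonneg
    (fun x hx => hmono x₀ x le_rfl hx) (fun x hx => ?_) (mul_two_rpow_le_rpow hC.le hf₀ hβ1) ?_
  · have h := hiter x (2 * x) hx (by linarith)
    rwa [show 2 * x - x = x by ring, ← div_mul_cancel₀ α h1β.ne'] at h
  · calc (2 * x₀) ^ (α / (1 - β)) * f x₀
        ≤ C ^ (1 / (1 - β)) + (2 * x₀) ^ (α / (1 - β)) * f x₀ :=
          le_add_of_nonneg_left (by positivity)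
      _ ≤ _ := le_mul_of_one_le_left (by positivity) (one_le_rpow one_le_two (by positivity))
end

section
/- Let R > 0 and let f : [0, R] → ℝ be a nonnegative, nonincreasing function. Let c₀ > 0, α > 0, β > 1 and S̃ ≥ 0 be constants such that f(ξ) ≤ c₀ · (ξ − η)^{−α} · ( f(η) + S̃ · (R − η)^{α/(β−1)} )^β for all 0 ≤ η < ξ ≤ R. Assume in addition that R^{α/(β−1)} ≥ ( 2^{β(α+β−1)/(β−1)} · c₀ )^{1/(β−1)} · ( f(0) + S̃ · R^{α/(β−1)} ). Then f(R) = 0. -/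
/-!
With `γ = α / (β - 1)` and `M = f 0 + S' * R ^ γ`, one shows `f (R - R t) ≤ M t ^ γ` along the
dyadic values `t = 2⁻ᵏ`. Passing from `t` to `t / 2`, the bracket `f η + S' (R - η) ^ γ` at
`η = R - R t` is at most `2 M t ^ γ`, and because `γ β = α + γ` the iteration inequality returns
exactly `M (t / 2) ^ γ` as soon as `2 ^ (α + β + γ) c₀ M ^ (β - 1) ≤ R ^ α`; this is the size
hypothesis raised to the power `β - 1`. Monotonicity then gives `f R ≤ M 2 ^ (-k γ) → 0`.
-/

open Filter Topology

theorem mul_rpow_le_of_rpow_one_div_mul_le {C M X p α : ℝ} (hp : 0 < p) (hC : 0 ≤ C)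
    (hM : 0 ≤ M) (hX : 0 ≤ X) (h : C ^ (1 / p) * M ≤ X ^ (α / p)) : C * M ^ p ≤ X ^ α := by
  have := Real.rpow_le_rpow (by positivity) h hp.le
  rwa [Real.mul_rpow (by positivity) hM, ← Real.rpow_mul hC, ← Real.rpow_mul hX,
    one_div_mul_cancel hp.ne', div_mul_cancel₀ α hp.ne', Real.rpow_one] at this

namespace Stampacchia

variable {R c₀ α β γ S' M : ℝ} {f : ℝ → ℝ}

theorem mul_rpow_neg_mul_rpow_le {s : ℝ} (hR : 0 < R) (hs : 0 < s) (hM : 0 ≤ M)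
    (hβ : β ≠ 0) (hγ : γ * (β - 1) = α)
    (hsmall : 2 ^ (α + β + γ) * c₀ * M ^ (β - 1) ≤ R ^ α) :
    c₀ * (R * s) ^ (-α) * (2 * M * (2 * s) ^ γ) ^ β ≤ M * s ^ γ := by
  have hγβ : γ * β = α + γ := by linear_combination hγ
  have h2s : 0 < 2 * s := by positivity
  have hMβ : M ^ β = M ^ (β - 1) * M := by
    rw [← Real.rpow_add_one' hM (by simpa using hβ), sub_add_cancel]
  calc c₀ * (R * s) ^ (-α) * (2 * M * (2 * s) ^ γ) ^ β
      = 2 ^ (α + β + γ) * c₀ * M ^ (β - 1) * (M * s ^ γ) / R ^ α := by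
        rw [Real.mul_rpow hR.le hs.le, Real.mul_rpow (by positivity) (by positivity),
          Real.mul_rpow (by norm_num) hM, ← Real.rpow_mul h2s.le, hγβ, Real.rpow_add h2s,
          Real.mul_rpow (by norm_num) hs.le, Real.mul_rpow (by norm_num) hs.le,
          Real.rpow_neg hR.le, Real.rpow_neg hs.le, Real.rpow_add (by norm_num),
          Real.rpow_add (by norm_num), hMβ]
        have : 0 < s ^ α := by positivity
        field_simp
    _ ≤ R ^ α * (M * s ^ γ) / R ^ α := by gcongr
    _ = M * s ^ γ := by field_simp

theorem apply_sub_mul_div_two_le {t : ℝ} (hR : 0 < R) (hc₀ : 0 ≤ c₀) (hβ : 0 < β)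
    (hγ : γ * (β - 1) = α) (hS : 0 ≤ S') (hSM : S' * R ^ γ ≤ M)
    (hsmall : 2 ^ (α + β + γ) * c₀ * M ^ (β - 1) ≤ R ^ α)
    (hnonneg : ∀ x, 0 ≤ x → x ≤ R → 0 ≤ f x)
    (hiter : ∀ η ξ, 0 ≤ η → η < ξ → ξ ≤ R →
      f ξ ≤ c₀ * (ξ - η) ^ (-α) * (f η + S' * (R - η) ^ γ) ^ β)
    (ht : 0 < t) (ht1 : t ≤ 1) (hft : f (R - R * t) ≤ M * t ^ γ) :
    f (R - R * (t / 2)) ≤ M * (t / 2) ^ γ := by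
  have hη : 0 ≤ R - R * t := by nlinarith
  have hM : 0 ≤ M := (by positivity : 0 ≤ S' * R ^ γ).trans hSM
  have hbracket : f (R - R * t) + S' * (R * t) ^ γ ≤ 2 * M * (2 * (t / 2)) ^ γ := by
    have hSt : S' * (R * t) ^ γ ≤ M * t ^ γ := by
      rw [Real.mul_rpow hR.le ht.le, ← mul_assoc]
      exact mul_le_mul_of_nonneg_right hSM (by positivity)
    rw [mul_div_cancel₀ t two_ne_zero]
    linarith
  calc f (R - R * (t / 2))
      ≤ c₀ * (R * (t / 2)) ^ (-α) * (f (R - R * t) + S' * (R * t) ^ γ) ^ β := by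
        have := hiter (R - R * t) (R - R * (t / 2)) hη (by nlinarith) (by nlinarith)
        rwa [sub_sub_cancel, show R - R * (t / 2) - (R - R * t) = R * (t / 2) by ring] at this
    _ ≤ c₀ * (R * (t / 2)) ^ (-α) * (2 * M * (2 * (t / 2)) ^ γ) ^ β := by
        gcongr
        exact add_nonneg (hnonneg _ hη (by nlinarith)) (by positivity)
    _ ≤ M * (t / 2) ^ γ := mul_rpow_neg_mul_rpow_le hR (by positivity) hM hβ.ne' hγ hsmall

theorem apply_sub_mul_half_pow_le (hR : 0 < R) (hc₀ : 0 ≤ c₀) (hβ : 0 < β)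
    (hγ : γ * (β - 1) = α) (hS : 0 ≤ S') (hSM : S' * R ^ γ ≤ M) (hf0 : f 0 ≤ M)
    (hsmall : 2 ^ (α + β + γ) * c₀ * M ^ (β - 1) ≤ R ^ α)
    (hnonneg : ∀ x, 0 ≤ x → x ≤ R → 0 ≤ f x)
    (hiter : ∀ η ξ, 0 ≤ η → η < ξ → ξ ≤ R →
      f ξ ≤ c₀ * (ξ - η) ^ (-α) * (f η + S' * (R - η) ^ γ) ^ β) (k : ℕ) :
    f (R - R * (1 / 2) ^ k) ≤ M * ((1 / 2) ^ k) ^ γ := by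
  induction k with
  | zero => simpa using hf0
  | succ k ih =>
    rw [pow_succ, ← div_eq_mul_one_div]
    exact apply_sub_mul_div_two_le hR hc₀ hβ hγ hS hSM hsmall hnonneg hiter (by positivity)
      (pow_le_one₀ (by norm_num) (by norm_num)) ih

end Stampacchia

/-- Inhomogeneous Stampacchia-type iteration lemma. -/
theorem inhomogeneous_stampacchia
    (R c₀ α β S' : ℝ) (f : ℝ → ℝ)
    (hR : 0 < R) (hc₀ : 0 < c₀) (hα : 0 < α) (hβ : 1 < β) (hS : 0 ≤ S')
    (hnonneg : ∀ x, 0 ≤ x → x ≤ R → 0 ≤ f x)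
    (hmono : ∀ x y, 0 ≤ x → x ≤ y → y ≤ R → f y ≤ f x)
    (hiter : ∀ η ξ, 0 ≤ η → η < ξ → ξ ≤ R →
      f ξ ≤ c₀ * (ξ - η) ^ (-α) * (f η + S' * (R - η) ^ (α / (β - 1))) ^ β)
    (hsize : (2 ^ (β * (α + β - 1) / (β - 1)) * c₀) ^ (1 / (β - 1)) *
        (f 0 + S' * R ^ (α / (β - 1))) ≤ R ^ (α / (β - 1))) :
    f R = 0 := by
  have hβ1 : 0 < β - 1 := by linarith
  set γ := α / (β - 1) with hγ_def
  have hγ_pos : 0 < γ := div_pos hα hβ1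
  set M := f 0 + S' * R ^ γ
  have hf0_nonneg : 0 ≤ f 0 := hnonneg 0 le_rfl hR.le
  have hSR : 0 ≤ S' * R ^ γ := by positivity
  have hsmall : 2 ^ (α + β + γ) * c₀ * M ^ (β - 1) ≤ R ^ α := by
    rw [show β * (α + β - 1) / (β - 1) = α + β + γ by rw [hγ_def]; field_simp; ring] at hsize
    exact mul_rpow_le_of_rpow_one_div_mul_le hβ1 (by positivity) (by positivity) hR.le hsize
  have hdecay (k : ℕ) : f R ≤ M * ((1 / 2) ^ k) ^ γ := by
    have hk₀ : 0 < (1 / 2 : ℝ) ^ k := by positivity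
    have hk₁ : (1 / 2 : ℝ) ^ k ≤ 1 := pow_le_one₀ (by norm_num) (by norm_num)
    refine (hmono (R - R * (1 / 2) ^ k) R (by nlinarith) (by nlinarith) le_rfl).trans ?_
    exact Stampacchia.apply_sub_mul_half_pow_le hR hc₀.le (by linarith)
      (div_mul_cancel₀ α hβ1.ne') hS (by linarith) (by linarith) hsmall hnonneg hiter k
  have hlim : Tendsto (fun k : ℕ => M * ((1 / 2 : ℝ) ^ k) ^ γ) atTop (𝓝 0) := by
    simpa [Real.zero_rpow hγ_pos.ne'] using
      ((tendsto_pow_atTop_nhds_zero_of_lt_one (by norm_num) one_half_lt_one).rpow_const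
        (Or.inr hγ_pos.le)).const_mul M
  exact le_antisymm (ge_of_tendsto' hlim hdecay) (hnonneg R hR.le le_rfl)
end

section
/- Let n > 1, α > 2, ε > 0 and δ > 0. Then for every z > 0, the derivative of the regularized mobility satisfies 0 ≤ f_{ε,δ}′(z) = z^{n+α−1}·(n·z^{α} + ε·α·z^{n}) / (z^{α} + ε·z^{n} + δ·z^{n+α})² ≤ max(n, α) · z^{n−1}. -/
/-!
By the quotient rule the `δ`-terms cancel in the numerator of `f′`, which leaves
`z^(n+α-1) (n z^α + ε α z^n)`. With `D = z^α + ε z^n + δ z^(n+α)` one has `z^α ≤ D` and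
`n z^α + ε α z^n ≤ max(n, α) D`, hence
`f′(z) = z^(n-1) · z^α (n z^α + ε α z^n) / D² ≤ max(n, α) z^(n-1)`.
-/

open Filter Topology

noncomputable def regularizedMobility (n α ε δ : ℝ) (z : ℝ) : ℝ :=
  z ^ (n + α) / (z ^ α + ε * z ^ n + δ * z ^ (n + α))

theorem hasDerivAt_regularizedMobility {n α ε δ z : ℝ} (hz : 0 < z)
    (hD : z ^ α + ε * z ^ n + δ * z ^ (n + α) ≠ 0) :
    HasDerivAt (regularizedMobility n α ε δ)
      (z ^ (n + α - 1) * (n * z ^ α + ε * α * z ^ n) /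
        (z ^ α + ε * z ^ n + δ * z ^ (n + α)) ^ 2) z := by
  have hz0 : z ≠ 0 := hz.ne'
  have hpow (p : ℝ) := Real.hasDerivAt_rpow_const (p := p) (Or.inl hz0)
  refine ((hpow (n + α)).div (((hpow α).add ((hpow n).const_mul ε)).add
    ((hpow (n + α)).const_mul δ)) hD).congr_deriv ?_
  simp only [Pi.add_apply, Real.rpow_sub_one hz0, Real.rpow_add hz]
  field_simp
  ring

theorem mul_add_le_max_mul_add_add_sq {n α a b c : ℝ} (hn : 0 ≤ n) (hα : 0 ≤ α) (ha : 0 ≤ a)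
    (hb : 0 ≤ b) (hc : 0 ≤ c) : a * (n * a + α * b) ≤ max n α * (a + b + c) ^ 2 := by
  have hM : 0 ≤ max n α := hn.trans (le_max_left n α)
  have hlin : n * a + α * b ≤ max n α * (a + b + c) := by
    nlinarith [mul_le_mul_of_nonneg_right (le_max_left n α) ha,
      mul_le_mul_of_nonneg_right (le_max_right n α) hb, mul_nonneg hM hc]
  calc a * (n * a + α * b) ≤ (a + b + c) * (max n α * (a + b + c)) :=
        mul_le_mul (by linarith) hlin (by positivity) (by positivity)
    _ = max n α * (a + b + c) ^ 2 := by ring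

theorem regularizedMobility_deriv_formula_le {n α ε δ z : ℝ} (hn : 0 ≤ n) (hα : 0 ≤ α)
    (hε : 0 ≤ ε) (hδ : 0 ≤ δ) (hz : 0 < z) :
    z ^ (n + α - 1) * (n * z ^ α + ε * α * z ^ n) /
        (z ^ α + ε * z ^ n + δ * z ^ (n + α)) ^ 2 ≤ max n α * z ^ (n - 1) := by
  have hsplit : z ^ (n + α - 1) * (n * z ^ α + ε * α * z ^ n)
      = z ^ (n - 1) * (z ^ α * (n * z ^ α + α * (ε * z ^ n))) := by
    rw [show n + α - 1 = n - 1 + α by ring, Real.rpow_add hz]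
    ring
  rw [hsplit, div_le_iff₀ (by positivity)]
  calc z ^ (n - 1) * (z ^ α * (n * z ^ α + α * (ε * z ^ n)))
      ≤ z ^ (n - 1) * (max n α * (z ^ α + ε * z ^ n + δ * z ^ (n + α)) ^ 2) := by
        gcongr ?_ * ?_
        exact mul_add_le_max_mul_add_add_sq hn hα (by positivity) (by positivity) (by positivity)
    _ = _ := by ring

/-- The derivative of the regularized mobility: its explicit formula, nonnegativity,
and the bound `f_{ε,δ}′(z) ≤ max(n, α) · z^{n−1}` for `z > 0`. -/
theorem regularized_mobility_derivative_bound (n α ε δ : ℝ)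
    (hn : 1 < n) (hα : 2 < α) (hε : 0 < ε) (hδ : 0 < δ)
    (f : ℝ → ℝ)
    (hf : ∀ z : ℝ, 0 < z →
      f z = z ^ (n + α) / (z ^ α + ε * z ^ n + δ * z ^ (n + α))) :
    ∀ z : ℝ, 0 < z →
      deriv f z =
        z ^ (n + α - 1) * (n * z ^ α + ε * α * z ^ n) /
          (z ^ α + ε * z ^ n + δ * z ^ (n + α)) ^ 2 ∧
      0 ≤ deriv f z ∧
      deriv f z ≤ max n α * z ^ (n - 1) := by
  intro z hz
  have hn0 : 0 ≤ n := by linarith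
  have hα0 : 0 ≤ α := by linarith
  have hf_eq : f =ᶠ[𝓝 z] regularizedMobility n α ε δ :=
    eventually_gt_nhds hz |>.mono fun x hx => hf x hx
  have hderiv :=
    ((hasDerivAt_regularizedMobility hz (by positivity)).congr_of_eventuallyEq hf_eq).deriv
  refine ⟨hderiv, ?_, ?_⟩
  · rw [hderiv]
    positivity
  · rw [hderiv]
    exact regularizedMobility_deriv_formula_le hn0 hα0 hε.le hδ.le hz
end

section
/- Let n ∈ (1, 2) and α > 2. There exist constants c₁ > 0 and c₂ > 0, depending only on n and α, such that for all ε ∈ (0, 1), δ ∈ (0, 1), γ > 0 and all z > 0: | f_{ε,δ}′(z) · G_{ε,δ,γ}′(z) | ≤ c₁·z^{n−1} + c₂, where f_{ε,δ}′(z) = z^{n+α−1}(n·z^{α} + ε·α·z^{n})/(z^{α} + ε·z^{n} + δ·z^{n+α})² and G_{ε,δ,γ}′(z) = ∫₁^z dr/(f_{ε,δ}(r) + γ). -/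
set_option maxHeartbeats 1000000 in
lemma key_alg (n α ε δ z P Q D : ℝ) (hn1 : 1 < n) (hα : 2 < α)
    (hε : 0 < ε) (hε1 : ε ≤ 1) (hδ : 0 < δ) (hδ1 : δ ≤ 1) (hz : 0 < z)
    (hP : 0 < P) (hQ : 0 < Q) (hD1 : P ≤ D) (hD2 : ε * Q ≤ D) (hD3 : δ * (P * Q) ≤ D) :
    P * Q / z * (n * P + ε * α * Q) / D ^ 2 *
        ((1 + z / Q) / (n - 1) + ε * (1 + z / P) / (α - 1) + δ * (z + 1)) ≤
      (n + α) * (1 / (n - 1) + 1 / (α - 1) + 1) * (Q / z) +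
        (n + α) * (1 / (n - 1) + 1 / (α - 1) + 1) := by
  have hD : 0 < D := lt_of_lt_of_le hP hD1
  have hn0 : (0:ℝ) < n - 1 := by linarith
  have hα0 : (0:ℝ) < α - 1 := by linarith
  have hnpos : (0:ℝ) < n := by linarith
  have hαpos : (0:ℝ) < α := by linarith
  have hb1 : (0:ℝ) ≤ 1 / (n - 1) := by positivity
  have hb2 : (0:ℝ) ≤ 1 / (α - 1) := by positivity
  set F : ℝ := P * Q / z * (n * P + ε * α * Q) / D ^ 2 with hF
  have hPP : P * P ≤ D * D := mul_le_mul hD1 hD1 hP.le hD.le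
  have hQP : ε * Q * P ≤ D * D := mul_le_mul hD2 hD1 hP.le hD.le
  have hQQ : ε * Q * (ε * Q) ≤ D * D := mul_le_mul hD2 hD2 (by positivity) hD.le
  have hPdPQ : P * (δ * (P * Q)) ≤ D * D := mul_le_mul hD1 hD3 (by positivity) hD.le
  have hQdPQ : ε * Q * (δ * (P * Q)) ≤ D * D := mul_le_mul hD2 hD3 (by positivity) hD.le
  have h1 : F ≤ (n + α) * (Q / z) := by
    rw [hF, div_le_iff₀ (by positivity), div_mul_eq_mul_div, div_le_iff₀ hz]
    have e : (n + α) * (Q / z) * D ^ 2 * z = (n + α) * Q * D ^ 2 := by field_simp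
    rw [e]
    nlinarith [mul_le_mul_of_nonneg_left hPP (by positivity : (0:ℝ) ≤ n * Q),
      mul_le_mul_of_nonneg_left hQP (by positivity : (0:ℝ) ≤ α * Q)]
  have h2 : F * (z / Q) ≤ n + α := by
    have e : F * (z / Q) = (n * P ^ 2 + ε * α * (P * Q)) / D ^ 2 := by
      rw [hF]; field_simp
    rw [e, div_le_iff₀ (by positivity)]
    nlinarith [mul_le_mul_of_nonneg_left hPP hnpos.le,
      mul_le_mul_of_nonneg_left hQP hαpos.le]
  have h4 : F * (ε * (z / P)) ≤ n + α := by
    have e : F * (ε * (z / P)) = (ε * n * (P * Q) + ε ^ 2 * α * Q ^ 2) / D ^ 2 := by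
      rw [hF]; field_simp
    rw [e, div_le_iff₀ (by positivity)]
    nlinarith [mul_le_mul_of_nonneg_left hQP hnpos.le,
      mul_le_mul_of_nonneg_left hQQ hαpos.le]
  have h5 : F * (δ * z) ≤ n + α := by
    have e : F * (δ * z) = (n * (P * (δ * (P * Q))) + α * (ε * Q * (δ * (P * Q)))) / D ^ 2 := by
      rw [hF]; field_simp
    rw [e, div_le_iff₀ (by positivity)]
    nlinarith [mul_le_mul_of_nonneg_left hPdPQ hnpos.le,
      mul_le_mul_of_nonneg_left hQdPQ hαpos.le]
  have hF0 : 0 ≤ F := by rw [hF]; positivity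
  have h3 : F * ε ≤ (n + α) * (Q / z) :=
    le_trans (mul_le_of_le_one_right hF0 hε1) h1
  have h6 : F * δ ≤ (n + α) * (Q / z) :=
    le_trans (mul_le_of_le_one_right hF0 hδ1) h1
  have b1 : F * (1 / (n - 1)) ≤ (n + α) * (Q / z) * (1 / (n - 1)) :=
    mul_le_mul_of_nonneg_right h1 hb1
  have b2 : F * (z / Q) * (1 / (n - 1)) ≤ (n + α) * (1 / (n - 1)) :=
    mul_le_mul_of_nonneg_right h2 hb1
  have b3 : F * ε * (1 / (α - 1)) ≤ (n + α) * (Q / z) * (1 / (α - 1)) :=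
    mul_le_mul_of_nonneg_right h3 hb2
  have b4 : F * (ε * (z / P)) * (1 / (α - 1)) ≤ (n + α) * (1 / (α - 1)) :=
    mul_le_mul_of_nonneg_right h4 hb2
  calc F * ((1 + z / Q) / (n - 1) + ε * (1 + z / P) / (α - 1) + δ * (z + 1))
      = F * (1 / (n - 1)) + F * (z / Q) * (1 / (n - 1)) + F * ε * (1 / (α - 1)) +
        F * (ε * (z / P)) * (1 / (α - 1)) + F * (δ * z) + F * δ := by ring
    _ ≤ (n + α) * (Q / z) * (1 / (n - 1)) + (n + α) * (1 / (n - 1)) +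
        (n + α) * (Q / z) * (1 / (α - 1)) + (n + α) * (1 / (α - 1)) + (n + α) +
        (n + α) * (Q / z) := by
        linarith [b1, b2, b3, b4, h5, h6]
    _ = (n + α) * (1 / (n - 1) + 1 / (α - 1) + 1) * (Q / z) +
        (n + α) * (1 / (n - 1) + 1 / (α - 1) + 1) := by ring

open Real MeasureTheory intervalIntegral

lemma rpow_int_bound (p z : ℝ) (hp : 1 < p) (hz : 0 < z) :
    |∫ r in (1:ℝ)..z, r ^ (-p)| ≤ (1 + z ^ (1 - p)) / (p - 1) := by
  have h0 : (0:ℝ) ∉ Set.uIcc 1 z := by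
    rw [Set.mem_uIcc]
    push_neg
    constructor <;> intro h <;> [linarith; linarith]
  have hval : (∫ r in (1:ℝ)..z, r ^ (-p)) = (z ^ (-p + 1) - 1) / (-p + 1) := by
    rw [integral_rpow (Or.inr ⟨by intro h; rw [neg_inj] at h; linarith, h0⟩)]
    rw [Real.one_rpow]
  rw [hval]
  rw [abs_div, abs_of_neg (by linarith : -p + 1 < 0)]
  have hzz : (0:ℝ) ≤ z ^ (-p + 1) := Real.rpow_nonneg hz.le _
  have habs : |z ^ (-p + 1) - 1| ≤ z ^ (-p + 1) + 1 := by
    rw [abs_sub_le_iff]; constructor <;> linarith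
  have hep : z ^ (-p + 1) = z ^ (1 - p) := by ring_nf
  rw [div_le_div_iff₀ (by linarith) (by linarith)]
  rw [hep] at habs ⊢
  nlinarith [abs_nonneg (z ^ (1-p) - 1)]

set_option maxHeartbeats 1000000 in
lemma integral_bound (n α ε δ γ z : ℝ) (hn1 : 1 < n) (hα : 2 < α)
    (hε : 0 < ε) (hδ : 0 < δ) (hγ : 0 < γ) (hz : 0 < z) :
    |∫ r in (1:ℝ)..z, 1 / (r ^ (n + α) / (r ^ α + ε * r ^ n + δ * r ^ (n + α)) + γ)| ≤
      (1 + z ^ (1 - n)) / (n - 1) + ε * ((1 + z ^ (1 - α)) / (α - 1)) + δ * (z + 1) := by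
  set h : ℝ → ℝ := fun r => 1 / (r ^ (n + α) / (r ^ α + ε * r ^ n + δ * r ^ (n + α)) + γ)
    with hh
  set g : ℝ → ℝ := fun r => r ^ (-n) + ε * r ^ (-α) + δ with hg
  have hmem : ∀ r ∈ Set.uIcc (1:ℝ) z, 0 < r := by
    intro r hr
    rcases Set.mem_uIcc.mp hr with h' | h' <;> [linarith [h'.1]; linarith [h'.1]]
  -- pointwise facts
  have hEpos : ∀ r : ℝ, 0 < r → 0 < r ^ α + ε * r ^ n + δ * r ^ (n + α) := by
    intro r hr
    have := Real.rpow_pos_of_pos hr α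
    have := Real.rpow_pos_of_pos hr n
    have := Real.rpow_pos_of_pos hr (n + α)
    positivity
  have hfpos : ∀ r : ℝ, 0 < r →
      0 < r ^ (n + α) / (r ^ α + ε * r ^ n + δ * r ^ (n + α)) := by
    intro r hr
    exact div_pos (Real.rpow_pos_of_pos hr _) (hEpos r hr)
  have hpos : ∀ r : ℝ, 0 < r → 0 < h r := by
    intro r hr
    have := hfpos r hr
    rw [hh]
    positivity
  have hle : ∀ r : ℝ, 0 < r → h r ≤ g r := by
    intro r hr
    have hf := hfpos r hr
    have hE := hEpos r hr
    have hR : (0:ℝ) < r ^ (n + α) := Real.rpow_pos_of_pos hr _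
    have key : g r * (r ^ (n + α) / (r ^ α + ε * r ^ n + δ * r ^ (n + α))) = 1 := by
      rw [hg]
      have e1 : r ^ (-n) * r ^ (n + α) = r ^ α := by
        rw [← Real.rpow_add hr]; ring_nf
      have e2 : r ^ (-α) * r ^ (n + α) = r ^ n := by
        rw [← Real.rpow_add hr]; ring_nf
      field_simp
      nlinarith [e1, e2]
    calc h r ≤ 1 / (r ^ (n + α) / (r ^ α + ε * r ^ n + δ * r ^ (n + α))) := by
          rw [hh]
          exact one_div_le_one_div_of_le hf (by linarith)
      _ = g r := by
          rw [eq_comm, eq_div_iff hf.ne']; exact key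
  -- continuity / integrability
  have hrc : ∀ c : ℝ, ContinuousOn (fun r : ℝ => r ^ c) (Set.uIcc 1 z) := by
    intro c r hr
    exact (Real.continuousAt_rpow_const r c (Or.inl (hmem r hr).ne')).continuousWithinAt
  have hEc : ContinuousOn (fun r : ℝ => r ^ α + ε * r ^ n + δ * r ^ (n + α))
      (Set.uIcc 1 z) :=
    ((hrc α).add (continuousOn_const.mul (hrc n))).add (continuousOn_const.mul (hrc (n + α)))
  have hhc : ContinuousOn h (Set.uIcc 1 z) := by
    apply continuousOn_const.div
    · exact (((hrc (n + α)).div hEc fun r hr => (hEpos r (hmem r hr)).ne').add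
        continuousOn_const)
    · intro r hr
      exact (by linarith [hfpos r (hmem r hr)] : (0:ℝ) <
        r ^ (n + α) / (r ^ α + ε * r ^ n + δ * r ^ (n + α)) + γ).ne'
  have hgc : ContinuousOn g (Set.uIcc 1 z) :=
    ((hrc (-n)).add (continuousOn_const.mul (hrc (-α)))).add continuousOn_const
  have hhi : IntervalIntegrable h volume 1 z := hhc.intervalIntegrable
  have hgi : IntervalIntegrable g volume 1 z := hgc.intervalIntegrable
  have h0 : (0:ℝ) ∉ Set.uIcc (1:ℝ) z := fun hc => absurd (hmem 0 hc) (lt_irrefl 0)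
  have hi1 : IntervalIntegrable (fun r : ℝ => r ^ (-n)) volume 1 z :=
    intervalIntegrable_rpow (Or.inr h0)
  have hi2 : IntervalIntegrable (fun r : ℝ => ε * r ^ (-α)) volume 1 z :=
    (intervalIntegrable_rpow (Or.inr h0)).const_mul ε
  have hi3 : IntervalIntegrable (fun _ : ℝ => δ) volume 1 z :=
    intervalIntegrable_const
  -- |∫ h| ≤ |∫ g|
  have step1 : |∫ r in (1:ℝ)..z, h r| ≤ |∫ r in (1:ℝ)..z, g r| := by
    rcases le_total 1 z with h1z | hz1
    · have hIcc : ∀ r ∈ Set.Icc (1:ℝ) z, 0 < r := by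
        intro r hr; exact hmem r (by rw [Set.uIcc_of_le h1z]; exact hr)
      have hnn : 0 ≤ ∫ r in (1:ℝ)..z, h r :=
        intervalIntegral.integral_nonneg h1z fun u hu => (hpos u (hIcc u hu)).le
      rw [abs_of_nonneg hnn]
      refine le_trans ?_ (le_abs_self _)
      exact intervalIntegral.integral_mono_on h1z hhi hgi fun r hr => hle r (hIcc r hr)
    · have hIcc : ∀ r ∈ Set.Icc z (1:ℝ), 0 < r := by
        intro r hr
        refine hmem r ?_
        rw [Set.uIcc_comm, Set.uIcc_of_le hz1]; exact hr
      have e1 : (∫ r in (1:ℝ)..z, h r) = -∫ r in z..(1:ℝ), h r :=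
        intervalIntegral.integral_symm z 1
      have e2 : (∫ r in (1:ℝ)..z, g r) = -∫ r in z..(1:ℝ), g r :=
        intervalIntegral.integral_symm z 1
      rw [e1, e2, abs_neg, abs_neg]
      have hnn : 0 ≤ ∫ r in z..(1:ℝ), h r :=
        intervalIntegral.integral_nonneg hz1 fun u hu => (hpos u (hIcc u hu)).le
      rw [abs_of_nonneg hnn]
      refine le_trans ?_ (le_abs_self _)
      exact intervalIntegral.integral_mono_on hz1 hhi.symm hgi.symm
        fun r hr => hle r (hIcc r hr)
  refine le_trans step1 ?_
  -- split ∫ g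
  have esplit : (∫ r in (1:ℝ)..z, g r) =
      (∫ r in (1:ℝ)..z, r ^ (-n)) + (∫ r in (1:ℝ)..z, ε * r ^ (-α)) +
        ∫ r in (1:ℝ)..z, δ := by
    rw [hg, intervalIntegral.integral_add (hi1.add hi2) hi3,
      intervalIntegral.integral_add hi1 hi2]
  rw [esplit]
  have b1 := rpow_int_bound n z hn1 hz
  have b2 := rpow_int_bound α z (by linarith) hz
  have b3 : |∫ r in (1:ℝ)..z, δ| ≤ δ * (z + 1) := by
    rw [intervalIntegral.integral_const, smul_eq_mul, abs_mul, abs_of_pos hδ, mul_comm]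
    have : |z - 1| ≤ z + 1 := by
      rw [abs_sub_le_iff]; constructor <;> linarith
    nlinarith
  have b2' : |∫ r in (1:ℝ)..z, ε * r ^ (-α)| ≤ ε * ((1 + z ^ (1 - α)) / (α - 1)) := by
    rw [intervalIntegral.integral_const_mul, abs_mul, abs_of_pos hε]
    exact mul_le_mul_of_nonneg_left b2 hε.le
  have tri := abs_add_le ((∫ r in (1:ℝ)..z, r ^ (-n)) + ∫ r in (1:ℝ)..z, ε * r ^ (-α))
    (∫ r in (1:ℝ)..z, δ)
  have tri2 := abs_add_le (∫ r in (1:ℝ)..z, r ^ (-n)) (∫ r in (1:ℝ)..z, ε * r ^ (-α))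
  linarith [b1, b2', b3, tri, tri2]

/-- Uniform bound `|f_{ε,δ}′(z) · G_{ε,δ,γ}′(z)| ≤ c₁ z^{n−1} + c₂` with constants
depending only on `n` and `α`, for all `ε, δ ∈ (0,1)`, `γ > 0` and `z > 0`. -/
theorem mobility_entropy_derivative_bound (n α : ℝ)
    (hn1 : 1 < n) (hn2 : n < 2) (hα : 2 < α) :
    ∃ c₁ c₂ : ℝ, 0 < c₁ ∧ 0 < c₂ ∧
      ∀ ε δ γ z : ℝ, 0 < ε → ε < 1 → 0 < δ → δ < 1 → 0 < γ → 0 < z →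
        |(z ^ (n + α - 1) * (n * z ^ α + ε * α * z ^ n) /
            (z ^ α + ε * z ^ n + δ * z ^ (n + α)) ^ 2) *
          (∫ r in (1 : ℝ)..z,
            1 / (r ^ (n + α) / (r ^ α + ε * r ^ n + δ * r ^ (n + α)) + γ))| ≤
          c₁ * z ^ (n - 1) + c₂ := by
  have hn0 : (0:ℝ) < n - 1 := by linarith
  have hα0 : (0:ℝ) < α - 1 := by linarith
  refine ⟨(n + α) * (1 / (n - 1) + 1 / (α - 1) + 1),
    (n + α) * (1 / (n - 1) + 1 / (α - 1) + 1), by positivity, by positivity, ?_⟩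
  intro ε δ γ z hε hε1 hδ hδ1 hγ hz
  have hP : (0:ℝ) < z ^ α := Real.rpow_pos_of_pos hz α
  have hQ : (0:ℝ) < z ^ n := Real.rpow_pos_of_pos hz n
  have hR : (0:ℝ) < z ^ (n + α) := Real.rpow_pos_of_pos hz (n + α)
  have hR1 : (0:ℝ) < z ^ (n + α - 1) := Real.rpow_pos_of_pos hz _
  set D : ℝ := z ^ α + ε * z ^ n + δ * z ^ (n + α) with hDdef
  have hDpos : 0 < D := by positivity
  have hD1 : z ^ α ≤ D := by rw [hDdef]; nlinarith
  have hD2 : ε * z ^ n ≤ D := by rw [hDdef]; nlinarith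
  have hRsplit : z ^ (n + α) = z ^ n * z ^ α := Real.rpow_add hz n α
  have hD3 : δ * (z ^ α * z ^ n) ≤ D := by
    rw [hDdef, hRsplit]; nlinarith
  have hF0 : 0 ≤ z ^ (n + α - 1) * (n * z ^ α + ε * α * z ^ n) / D ^ 2 := by
    have hn' : (0:ℝ) < n := by linarith
    have hα' : (0:ℝ) < α := by linarith
    positivity
  rw [abs_mul, abs_of_nonneg hF0]
  have hIb := integral_bound n α ε δ γ z hn1 hα hε hδ hγ hz
  have step := mul_le_mul_of_nonneg_left hIb hF0
  refine le_trans step ?_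
  have e1 : z ^ (n + α - 1) = z ^ α * z ^ n / z := by
    rw [Real.rpow_sub hz, Real.rpow_one, hRsplit]; ring
  have e2 : z ^ (1 - n) = z / z ^ n := by
    rw [Real.rpow_sub hz, Real.rpow_one]
  have e3 : z ^ (1 - α) = z / z ^ α := by
    rw [Real.rpow_sub hz, Real.rpow_one]
  have e4 : z ^ (n - 1) = z ^ n / z := by
    rw [Real.rpow_sub hz, Real.rpow_one]
  rw [e1, e2, e3, e4]
  have key := key_alg n α ε δ z (z ^ α) (z ^ n) D hn1 hα hε hε1.le hδ hδ1.le hz hP hQ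
    hD1 hD2 hD3
  calc z ^ α * z ^ n / z * (n * z ^ α + ε * α * z ^ n) / D ^ 2 *
        ((1 + z / z ^ n) / (n - 1) + ε * ((1 + z / z ^ α) / (α - 1)) + δ * (z + 1))
      = z ^ α * z ^ n / z * (n * z ^ α + ε * α * z ^ n) / D ^ 2 *
        ((1 + z / z ^ n) / (n - 1) + ε * (1 + z / z ^ α) / (α - 1) + δ * (z + 1)) := by
        ring
    _ ≤ (n + α) * (1 / (n - 1) + 1 / (α - 1) + 1) * (z ^ n / z) +
        (n + α) * (1 / (n - 1) + 1 / (α - 1) + 1) := key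
end
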